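/- Let $R=\mathbb{Z}[z_1^{\pm 1},\ldots,z_n^{\pm 1}]$ be the Laurent polynomial ring in $n$ variables over $\mathbb{Z}$, let $M$ be an $R$-module, let $N \subseteq M$ be an $R$-submodule, and let $m_1,\ldots,m_n \in M$. Let $D$ be a set of positive integers that is cofinal for divisibility, i.e., for every positive integer $e$ there exists $d \in D$ with $e \mid d$. Assume that $z_1^d \cdot m_1 + \cdots + z_n^d \cdot m_n \in N$ for all $d \in D$. Then $m_1+\cdots+m_n \in N$. -/

import Mathlib

/-!
Pass to `M ⧸ N`, let `x` be the image of `∑ mᵢ` and `Q` the span of the images of the `mᵢ`.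
The ring `R` is a finitely generated `ℤ`-algebra, so its residue fields are finite (`ℤ` is a
Jacobson ring), and so is `R ⧸ pᵏ` for every maximal ideal `p`. Once `|(R ⧸ pᵏ)ˣ|` divides
`d ∈ D`, every `zᵢ ^ d - 1` lies in `pᵏ`, hence `x = ∑ (1 - zᵢ ^ d) • mᵢ ∈ pᵏ • Q`. By the Krull
intersection theorem `x` is then annihilated by an element outside `p`; as `p` is arbitrary,
`x = 0`.
-/

/-- The Laurent polynomial ring `ℤ[z₁^{±1},…,zₙ^{±1}]`, realized as the group ring
of `ℤⁿ` over `ℤ`. -/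
abbrev LaurentRing (n : ℕ) : Type := AddMonoidAlgebra ℤ (Fin n → ℤ)

/-- The variable `zᵢ`, a unit of the Laurent polynomial ring. -/
noncomputable def laurentVar {n : ℕ} (i : Fin n) : LaurentRing n :=
  AddMonoidAlgebra.single (Pi.single i 1) 1

theorem Int.jacobson_bot : (⊥ : Ideal ℤ).jacobson = ⊥ := by
  refine le_antisymm (fun x hx => ?_) Ideal.le_jacobson
  have hplus := Ideal.mem_jacobson_bot.mp hx 1
  have hminus := Ideal.mem_jacobson_bot.mp hx (-1)
  rw [Int.isUnit_iff] at hplus hminus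
  rw [Ideal.mem_bot]
  omega

instance Int.isJacobsonRing : IsJacobsonRing ℤ := by
  refine isJacobsonRing_iff_prime_eq.mpr fun P hP => ?_
  rcases eq_or_ne P ⊥ with rfl | hne
  · exact Int.jacobson_bot
  · have := hP.isMaximal hne
    exact Ideal.jacobson_eq_self_of_isMaximal

theorem finite_of_field_of_finiteType_int (F : Type*) [Field F] [Algebra ℤ F]
    [Algebra.FiniteType ℤ F] : Finite F := by
  have := finite_of_finite_type_of_isJacobsonRing ℤ F
  -- `F` is integral over `ℤ`, so the kernel of `ℤ → F` is maximal, hence nonzero.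
  have hmax : (RingHom.ker (algebraMap ℤ F)).IsMaximal :=
    Ideal.isMaximal_comap_of_isIntegral_of_isMaximal ⊥
  obtain ⟨q, hq, hq0⟩ := Submodule.exists_mem_ne_zero_of_ne_bot
    (Ring.ne_bot_of_isMaximal_of_not_isField hmax Int.not_isField)
  -- Identify the given `ℤ`-module structure with `zsmul`, the one `finite_of_fg_torsion` uses.
  obtain rfl : ‹Algebra ℤ F› = Ring.toIntAlgebra F := Subsingleton.elim _ _
  refine Module.finite_of_fg_torsion F fun x => ⟨⟨q, mem_nonZeroDivisors_of_ne_zero hq0⟩, ?_⟩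
  change q • x = 0
  rw [zsmul_eq_mul, ← eq_intCast (algebraMap ℤ F), RingHom.mem_ker.mp hq, zero_mul]

theorem Ideal.finite_quotient_of_finiteType_int {A : Type*} [CommRing A] [Algebra ℤ A]
    [Algebra.FiniteType ℤ A] (p : Ideal A) [p.IsMaximal] : Finite (A ⧸ p) := by
  let := Ideal.Quotient.field p
  have : Algebra.FiniteType ℤ (A ⧸ p) :=
    .of_surjective (Ideal.Quotient.mkₐ ℤ p) (Ideal.Quotient.mkₐ_surjective ℤ p)
  exact finite_of_field_of_finiteType_int (A ⧸ p)

theorem Ideal.pow_sub_one_mem_of_isUnit {R : Type*} [CommRing R] (I : Ideal R) [Finite (R ⧸ I)]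
    {u : R} (hu : IsUnit u) {d : ℕ} (hd : Nat.card (R ⧸ I)ˣ ∣ d) : u ^ d - 1 ∈ I := by
  obtain ⟨v, hv⟩ := hu.map (Ideal.Quotient.mk I)
  obtain ⟨c, rfl⟩ := hd
  rw [← Ideal.Quotient.eq_zero_iff_mem, map_sub, map_pow, map_one, ← hv, pow_mul,
    ← Units.val_pow_eq_pow_val, pow_card_eq_one', Units.val_one, one_pow, sub_self]

theorem sum_sub_sum_smul_mem_smul_span {R M ι : Type*} [CommRing R] [AddCommGroup M]
    [Module R M] [Fintype ι] (I : Ideal R) (z : ι → R) (m : ι → M) (hz : ∀ i, z i - 1 ∈ I) :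
    ∑ i, m i - ∑ i, z i • m i ∈ I • Submodule.span R (Set.range m) := by
  rw [← Finset.sum_sub_distrib]
  refine Submodule.sum_mem _ fun i _ => ?_
  have : m i - z i • m i = -(z i - 1) • m i := by rw [neg_sub, sub_smul, one_smul]
  rw [this]
  exact Submodule.smul_mem_smul (I.neg_mem (hz i)) (Submodule.subset_span ⟨i, rfl⟩)

theorem Submodule.eq_zero_of_forall_isMaximal_mem_pow_smul {R M : Type*} [CommRing R]
    [IsNoetherianRing R] [AddCommGroup M] [Module R M] {Q : Submodule R M} (hQ : Q.FG) {x : M}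
    (hx : ∀ p : Ideal R, p.IsMaximal → ∀ k : ℕ, x ∈ p ^ k • Q) : x = 0 := by
  by_contra hx0
  have hann : (Submodule.span R {x}).annihilator ≠ ⊤ := (Ideal.ne_top_iff_one _).mpr fun h1 =>
    hx0 (by simpa using (Submodule.mem_annihilator_span_singleton x 1).mp h1)
  obtain ⟨p, hp, hle⟩ := Ideal.exists_le_maximal _ hann
  have hxQ : x ∈ Q := by simpa using hx p hp 0
  have : Module.Finite R Q := Module.Finite.iff_fg.mpr hQ
  -- Krull: some `r ∈ p` fixes `x`, so `1 - r` annihilates `x` and must lie in `p`.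
  obtain ⟨r, hr⟩ := (p.mem_iInf_smul_pow_eq_bot_iff (⟨x, hxQ⟩ : Q)).mp <|
    Submodule.mem_iInf _ |>.mpr fun k => (Submodule.mem_smul_top_iff _ _ _).mpr (hx p hp k)
  have hkill : (1 - (r : R)) • x = 0 := by
    rw [sub_smul, one_smul, sub_eq_zero]
    exact (congrArg Subtype.val hr).symm
  have hone : (1 : R) ∈ p := by
    simpa using p.add_mem (hle ((Submodule.mem_annihilator_span_singleton _ _).mpr hkill)) r.2
  exact hp.ne_top ((Ideal.eq_top_iff_one p).mpr hone)

namespace LaurentRing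

instance (n : ℕ) : Algebra.FiniteType ℤ (LaurentRing n) :=
  AddMonoidAlgebra.finiteType_of_fg ℤ _

instance (n : ℕ) : IsNoetherianRing (LaurentRing n) :=
  Algebra.FiniteType.isNoetherianRing ℤ _

end LaurentRing

theorem isUnit_laurentVar {n : ℕ} (i : Fin n) : IsUnit (laurentVar i) :=
  .of_mul_eq_one (AddMonoidAlgebra.single (-Pi.single i 1) 1) <| by
    rw [laurentVar, AddMonoidAlgebra.single_mul_single, add_neg_cancel, one_mul,
      AddMonoidAlgebra.one_def]

theorem stmt1_general (n : ℕ) (M : Type) [AddCommGroup M] [Module (LaurentRing n) M]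
    (N : Submodule (LaurentRing n) M) (m : Fin n → M)
    (D : Set ℕ)
    (hDcofinal : ∀ e : ℕ, 1 ≤ e → ∃ d ∈ D, e ∣ d)
    (h : ∀ d ∈ D, (∑ i : Fin n, (laurentVar i ^ d) • m i) ∈ N) :
    (∑ i : Fin n, m i) ∈ N := by
  rw [← Submodule.Quotient.mk_eq_zero, ← N.mkQ_apply, map_sum]
  refine Submodule.eq_zero_of_forall_isMaximal_mem_pow_smul (R := LaurentRing n)
    (Submodule.fg_span (Set.finite_range fun i => N.mkQ (m i))) fun p hp k => ?_
  have := p.finite_quotient_of_finiteType_int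
  have := Ideal.finite_quotient_pow (IsNoetherian.noetherian p) k
  obtain ⟨d, hdD, hd⟩ := hDcofinal (Nat.card (LaurentRing n ⧸ p ^ k)ˣ) Nat.card_pos
  have hmem := sum_sub_sum_smul_mem_smul_span (p ^ k) _ (fun i => N.mkQ (m i))
    fun i => (p ^ k).pow_sub_one_mem_of_isUnit (isUnit_laurentVar i) hd
  have hvanish : N.mkQ (∑ i, laurentVar i ^ d • m i) = 0 :=
    (Submodule.Quotient.mk_eq_zero N).mpr (h d hdD)
  simp only [map_sum, map_smul] at hvanish
  simpa only [hvanish, sub_zero, map_sum] using hmem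

theorem stmt1 (n : ℕ) (M : Type) [AddCommGroup M] [Module (LaurentRing n) M]
    (N : Submodule (LaurentRing n) M) (m : Fin n → M)
    (D : Set ℕ) (hDpos : ∀ d ∈ D, 1 ≤ d)
    (hDcofinal : ∀ e : ℕ, 1 ≤ e → ∃ d ∈ D, e ∣ d)
    (h : ∀ d ∈ D, (∑ i : Fin n, (laurentVar i ^ d) • m i) ∈ N) :
    (∑ i : Fin n, m i) ∈ N :=
  stmt1_general n M N m D hDcofinal h
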